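/- arXiv:1210.6403 — 2 statements merged into one kernel-verified Lean document; each statement's English description precedes it below -/
import Mathlib

section
/- Let m ≥ 1, let O ⊆ ℝ^m be a nonempty open convex set, let f, g : O → ℝ be convex, and let X ⊆ O be a nonempty compact convex set containing at least two points. Let ε > 0, and suppose x* ∈ X satisfies g(x*) ≤ 0 and f(x*) ≤ f(x) for every x ∈ X with g(x) ≤ 0. Let ω : O → ℝ be convex and differentiable, let α > 0 satisfy ω(x) − ω(y) − ⟨∇ω(y), x − y⟩ ≥ (α/2)‖x − y‖² for all x, y ∈ X, let Θ > 0 satisfy D_ω(u,v) ≤ Θ for all u, v ∈ X, and let Ω ≥ 0 satisfy ‖x − y‖ ≤ Ω for all x, y ∈ X. Let κ₁ > 0, κ₂ > 0, and suppose sequences (x_k)_{k≥1} in X, (E_k)_{k≥1} in ℝ^m \ {0}, (e_k)_{k≥1} in ℝ^m, and (Δ_k)_{k≥1} with 0 < Δ_k ≤ 1/√(k+1) satisfy, for every k ≥ 1: e_k ∈ ∂f(x_k) if g(x_k) ≤ ε and e_k ∈ ∂g(x_k) otherwise; ‖e_k‖ ≤ κ₁; ‖e_k − E_k‖ ≤ κ₂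 Δ_k; and, with t_k = √(Θα)/(‖E_k‖ √k), the point x_{k+1} minimizes u ↦ ⟨t_k E_k − ∇ω(x_k), u⟩ + ω(u) over X. Then for every integer n ≥ 4, setting C = 2·√(Θ/α)·max{κ₁, κ₂}·(1 + ln 2)/(2 − √2) + √2·κ₂·Ω, either there exists k ∈ {1, ..., n} with g(x_k) ≤ ε and f(x_k) − f(x*) ≤ C/√n, or ε ≤ C/√n. -/
/-!
With `G_k = t_k E_k`, the point `x_{k+1}` is a mirror-descent step, so its first-order optimality
condition and the three-point identity for Bregman distances give
`t_k ⟪E_k, x_k - x*⟫ ≤ Θ / (2k) + D(x*, x_k) - D(x*, x_{k+1})`.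
Summed over the second half `⌈n/2⌉ ≤ k ≤ n` this telescopes to at most `Θ (1 + log 2)`, whereas
`∑ t_k ≥ √(Θα) (2 - √2) √n / (2 max κ₁ κ₂)`. Hence some such `k` has
`⟪E_k, x_k - x*⟫ ≤ (C - √2 κ₂ Ω) / √n`, and passing from `E_k` to `e_k` costs at most
`κ₂ Δ_k Ω ≤ √2 κ₂ Ω / √n`. At that `k` the subgradient inequality gives
`f(x_k) - f(x*) ≤ C / √n` if `g(x_k) ≤ ε`, and `ε < g(x_k) - g(x*) ≤ C / √n` otherwise.
-/

open scoped RealInnerProductSpace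

/-- The subdifferential of `f : O → ℝ` at `x`:
`∂f(x) = {v : f(y) ≥ f(x) + ⟪v, y - x⟫ for all y ∈ O}`. -/
def subdiff {m : ℕ} (O : Set (EuclideanSpace ℝ (Fin m)))
    (f : EuclideanSpace ℝ (Fin m) → ℝ) (x : EuclideanSpace ℝ (Fin m)) :
    Set (EuclideanSpace ℝ (Fin m)) :=
  {v | ∀ y ∈ O, f x + ⟪v, y - x⟫ ≤ f y}

/-- The Bregman distance associated to a differentiable function `ω`. -/
noncomputable def bregman {m : ℕ} (ω : EuclideanSpace ℝ (Fin m) → ℝ)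
    (u v : EuclideanSpace ℝ (Fin m)) : ℝ :=
  ω u - ω v - ⟪gradient ω v, u - v⟫

open scoped Gradient
open Finset Real

lemma two_mul_sqrt_add_one_sub_sqrt_le {x : ℝ} (hx : 0 < x) :
    2 * (√(x + 1) - √x) ≤ 1 / √x := by
  have hsx : 0 < √x := sqrt_pos.2 hx
  have hmono : √x ≤ √(x + 1) := sqrt_le_sqrt (by linarith)
  have hconj : (√(x + 1) - √x) * (√(x + 1) + √x) = 1 := by
    nlinarith [sq_sqrt hx.le, sq_sqrt (show 0 ≤ x + 1 by linarith)]
  rw [le_div_iff₀ hsx]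
  nlinarith

lemma one_div_le_log_sub_log_sub_one {x : ℝ} (hx : 1 < x) :
    1 / x ≤ log x - log (x - 1) := by
  have h := one_sub_inv_le_log_of_pos (x := x / (x - 1)) (by apply div_pos <;> linarith)
  rw [log_div (by linarith) (by linarith), inv_div] at h
  calc 1 / x = 1 - (x - 1) / x := by field_simp; ring
    _ ≤ _ := h

lemma sum_Icc_one_div_le_log {a b : ℕ} (ha : 2 ≤ a) (hab : a ≤ b) :
    ∑ k ∈ Icc a b, 1 / (k : ℝ) ≤ log b - log (a - 1) := by
  have htel := sum_Icc_sub hab (fun k : ℕ => log ((k : ℝ) - 1))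
  push_cast at htel
  rw [add_sub_cancel_right] at htel
  rw [← htel]
  refine sum_le_sum fun k hk => ?_
  have hk : (1 : ℝ) < k := by have := (mem_Icc.1 hk).1; exact_mod_cast (by omega : 1 < k)
  simpa using one_div_le_log_sub_log_sub_one hk

lemma sum_Icc_one_div_sqrt_ge {a b : ℕ} (ha : 1 ≤ a) (hab : a ≤ b) :
    2 * (√((b : ℝ) + 1) - √(a : ℝ)) ≤ ∑ k ∈ Icc a b, 1 / √(k : ℝ) := by
  have htel := sum_Icc_sub hab (fun k : ℕ => 2 * √(k : ℝ))
  push_cast at htel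
  rw [mul_sub, ← htel]
  refine sum_le_sum fun k hk => ?_
  have hk : (0 : ℝ) < k := by have := (mem_Icc.1 hk).1; exact_mod_cast (by omega : 0 < k)
  linarith [two_mul_sqrt_add_one_sub_sqrt_le hk]

lemma one_div_sqrt_le_sqrt_two_div_sqrt {y z : ℝ} (hz : 0 < z) (hzy : z ≤ 2 * y) :
    1 / √y ≤ √2 / √z := by
  have hy : 0 < √y := sqrt_pos.2 (by linarith)
  rw [div_le_div_iff₀ hy (sqrt_pos.2 hz), one_mul, ← sqrt_mul zero_le_two]
  exact sqrt_le_sqrt hzy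

lemma sum_Icc_half_one_div_le {n : ℕ} (hn : 4 ≤ n) :
    ∑ k ∈ Icc ((n + 1) / 2) n, 1 / (k : ℝ) ≤ 2 * log 2 := by
  have hk₀ : (n : ℝ) ≤ 4 * (((n + 1) / 2 : ℕ) - 1 : ℝ) := by
    have h : n + 4 ≤ 4 * ((n + 1) / 2) := by omega
    have h' : (n : ℝ) + 4 ≤ 4 * (((n + 1) / 2 : ℕ) : ℝ) := by exact_mod_cast h
    linarith
  have hpos : (0 : ℝ) < ((n + 1) / 2 : ℕ) - 1 := by
    have : 2 ≤ (n + 1) / 2 := by omega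
    have : (2 : ℝ) ≤ ((n + 1) / 2 : ℕ) := by exact_mod_cast this
    linarith
  calc ∑ k ∈ Icc ((n + 1) / 2) n, 1 / (k : ℝ)
      ≤ log n - log (((n + 1) / 2 : ℕ) - 1) := sum_Icc_one_div_le_log (by omega) (by omega)
    _ ≤ log 4 := by
      rw [sub_le_iff_le_add, ← log_mul (by norm_num) hpos.ne']
      exact log_le_log (by positivity) hk₀
    _ = 2 * log 2 := by
      rw [show (4 : ℝ) = 2 ^ 2 by norm_num, log_pow]; norm_num

lemma sum_Icc_half_one_div_sqrt_ge {n : ℕ} (hn : 1 ≤ n) :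
    (2 - √2) * √(n : ℝ) ≤ ∑ k ∈ Icc ((n + 1) / 2) n, 1 / √(k : ℝ) := by
  refine le_trans ?_ (sum_Icc_one_div_sqrt_ge (by omega) (by omega))
  have hk₀ : 2 * (((n + 1) / 2 : ℕ) : ℝ) ≤ n + 1 := by
    exact_mod_cast (by omega : 2 * ((n + 1) / 2) ≤ n + 1)
  have h2 : √2 * √(((n + 1) / 2 : ℕ) : ℝ) ≤ √((n : ℝ) + 1) := by
    rw [← sqrt_mul zero_le_two]; exact sqrt_le_sqrt hk₀
  have hn1 : √(n : ℝ) ≤ √((n : ℝ) + 1) := sqrt_le_sqrt (by linarith)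
  have hs2 := sqrt_two_lt_three_halves
  have h2' := mul_le_mul_of_nonneg_left h2 (sqrt_nonneg 2)
  rw [← mul_assoc, mul_self_sqrt zero_le_two] at h2'
  nlinarith [mul_le_mul_of_nonneg_left hn1 (by linarith : (0 : ℝ) ≤ 2 - √2)]

lemma exists_le_of_sum_mul_le {ι : Type*} {s : Finset ι} (hs : s.Nonempty) {w a : ι → ℝ} {c : ℝ}
    (hw : ∀ i ∈ s, 0 < w i) (h : ∑ i ∈ s, w i * a i ≤ c * ∑ i ∈ s, w i) :
    ∃ i ∈ s, a i ≤ c := by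
  rw [mul_sum] at h
  obtain ⟨i, hi, hle⟩ :=
    exists_le_of_sum_le hs (h.trans_eq (sum_congr rfl fun i _ => mul_comm _ _))
  exact ⟨i, hi, le_of_mul_le_mul_left hle (hw i hi)⟩

section InnerProductSpace

variable {F : Type*} [NormedAddCommGroup F] [InnerProductSpace ℝ F]

lemma inner_le_add_mul_of_norm_sub_le {e E y : F} {c δ r : ℝ} (hE : ⟪E, y⟫ ≤ c)
    (he : ‖e - E‖ ≤ δ) (hy : ‖y‖ ≤ r) (hδ : 0 ≤ δ) : ⟪e, y⟫ ≤ c + δ * r := by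
  have h := (real_inner_le_norm (e - E) y).trans (mul_le_mul he hy (norm_nonneg _) hδ)
  rw [inner_sub_left] at h
  linarith

lemma inner_le_sq_div_add {G y : F} {α : ℝ} (hα : 0 < α) :
    ⟪G, y⟫ ≤ ‖G‖ ^ 2 / (2 * α) + α / 2 * ‖y‖ ^ 2 := by
  have h := real_inner_le_norm G y
  rw [div_add' _ _ _ (by positivity), le_div_iff₀ (by positivity)]
  nlinarith [sq_nonneg (‖G‖ - α * ‖y‖)]

variable [CompleteSpace F]

lemma inner_add_gradient_nonneg_of_isMinOn {ω : F → ℝ} {X : Set F} {c p u : F}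
    (hX : Convex ℝ X) (hp : p ∈ X) (hu : u ∈ X) (hω : DifferentiableAt ℝ ω p)
    (hmin : IsMinOn (fun v => ⟪c, v⟫ + ω v) X p) :
    0 ≤ ⟪c + ∇ ω p, u - p⟫ := by
  have hderiv : HasFDerivAt (fun v => ⟪c, v⟫ + ω v)
      (innerSL ℝ c + InnerProductSpace.toDual ℝ F (∇ ω p)) p :=
    (innerSL ℝ c).hasFDerivAt.add hω.hasGradientAt
  simpa [inner_add_left] using hmin.localize.hasFDerivWithinAt_nonneg hderiv.hasFDerivWithinAt
    (sub_mem_posTangentConeAt_of_segment_subset (hX.segment_subset hp hu))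

end InnerProductSpace

lemma sub_le_inner_of_mem_subdiff {m : ℕ} {O : Set (EuclideanSpace ℝ (Fin m))}
    {f : EuclideanSpace ℝ (Fin m) → ℝ} {x y v : EuclideanSpace ℝ (Fin m)}
    (hv : v ∈ subdiff O f x) (hy : y ∈ O) : f x - f y ≤ ⟪v, x - y⟫ := by
  have h := hv y hy
  rw [← neg_sub x y, inner_neg_right] at h
  linarith

section Bregman

variable {m : ℕ} {ω : EuclideanSpace ℝ (Fin m) → ℝ} {X : Set (EuclideanSpace ℝ (Fin m))} {α : ℝ}

lemma inner_gradient_sub_eq_bregman (ω : EuclideanSpace ℝ (Fin m) → ℝ)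
    (u p y : EuclideanSpace ℝ (Fin m)) :
    ⟪∇ ω p - ∇ ω y, u - p⟫ = bregman ω u y - bregman ω u p - bregman ω p y := by
  simp only [bregman, inner_sub_left, inner_sub_right]
  ring

lemma inner_sub_le_of_isMinOn (hα : 0 < α) (hX : Convex ℝ X)
    {G y p u : EuclideanSpace ℝ (Fin m)} (hp : p ∈ X) (hu : u ∈ X)
    (hω : DifferentiableAt ℝ ω p) (hstrong : α / 2 * ‖p - y‖ ^ 2 ≤ bregman ω p y)
    (hmin : IsMinOn (fun v => ⟪G - ∇ ω y, v⟫ + ω v) X p) :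
    ⟪G, y - u⟫ ≤ ‖G‖ ^ 2 / (2 * α) + (bregman ω u y - bregman ω u p) := by
  have hopt := inner_add_gradient_nonneg_of_isMinOn hX hp hu hω hmin
  rw [sub_add_eq_add_sub, add_sub_assoc, inner_add_left,
    inner_gradient_sub_eq_bregman] at hopt
  have hyoung := inner_le_sq_div_add (G := G) (y := y - p) hα
  rw [norm_sub_rev] at hyoung
  have hsplit : ⟪G, y - u⟫ = ⟪G, y - p⟫ - ⟪G, u - p⟫ := by
    rw [← inner_sub_right, sub_sub_sub_cancel_right]
  linarith

lemma sum_inner_sub_le_of_isMinOn (hα : 0 < α) (hX : Convex ℝ X)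
    (hω : ∀ y ∈ X, DifferentiableAt ℝ ω y)
    (hstrong : ∀ y ∈ X, ∀ z ∈ X, α / 2 * ‖y - z‖ ^ 2 ≤ bregman ω y z)
    {x G : ℕ → EuclideanSpace ℝ (Fin m)} {u : EuclideanSpace ℝ (Fin m)} (hu : u ∈ X)
    {a b : ℕ} (hab : a ≤ b) (hx : ∀ k ∈ Icc a (b + 1), x k ∈ X)
    (hmin : ∀ k ∈ Icc a b, IsMinOn (fun v => ⟪G k - ∇ ω (x k), v⟫ + ω v) X (x (k + 1))) :
    ∑ k ∈ Icc a b, ⟪G k, x k - u⟫ ≤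
      ∑ k ∈ Icc a b, ‖G k‖ ^ 2 / (2 * α) + (bregman ω u (x a) - bregman ω u (x (b + 1))) := by
  have htel := sum_Icc_sub hab (fun k => -bregman ω u (x k))
  simp only [neg_sub_neg] at htel
  rw [← htel, ← sum_add_distrib]
  refine sum_le_sum fun k hk => ?_
  obtain ⟨hak, hkb⟩ := mem_Icc.1 hk
  have hxk : x k ∈ X := hx k (mem_Icc.2 ⟨hak, by omega⟩)
  have hxk1 : x (k + 1) ∈ X := hx (k + 1) (mem_Icc.2 ⟨by omega, by omega⟩)
  exact inner_sub_le_of_isMinOn hα hX hxk1 hu (hω _ hxk1) (hstrong _ hxk1 _ hxk) (hmin k hk)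

end Bregman

section Comirror

/-- The step size `t_k` of the comirror method. -/
noncomputable def comirrorStep {F : Type*} [Norm F] (Θ α : ℝ) (v : F) (k : ℕ) : ℝ :=
  √(Θ * α) / (‖v‖ * √k)

variable {F : Type*} [NormedAddCommGroup F] {Θ α : ℝ}

lemma comirrorStep_pos (hΘα : 0 < Θ * α) {v : F} (hv : v ≠ 0) {k : ℕ} (hk : 0 < k) :
    0 < comirrorStep Θ α v k := by
  unfold comirrorStep
  have := norm_pos_iff.2 hv
  positivity

lemma norm_comirrorStep_smul [NormedSpace ℝ F] (hΘα : 0 < Θ * α) {v : F} (hv : v ≠ 0) {k : ℕ}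
    (hk : 0 < k) :
    ‖comirrorStep Θ α v k • v‖ = √(Θ * α) / √k := by
  rw [norm_smul, Real.norm_of_nonneg (comirrorStep_pos hΘα hv hk).le, comirrorStep]
  have := norm_pos_iff.2 hv
  field_simp

lemma div_mul_one_div_sqrt_le_comirrorStep {L : ℝ} {v : F} (hv : v ≠ 0) (hvL : ‖v‖ ≤ L)
    {k : ℕ} (hk : 0 < k) : √(Θ * α) / L * (1 / √k) ≤ comirrorStep Θ α v k := by
  have hv' := norm_pos_iff.2 hv
  rw [div_mul_div_comm, mul_one, comirrorStep]
  gcongr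

lemma sum_comirrorStep_ge {L : ℝ} {E : ℕ → F} (hE : ∀ k, 1 ≤ k → E k ≠ 0)
    (hEL : ∀ k, 1 ≤ k → ‖E k‖ ≤ L) {n : ℕ} (hn : 1 ≤ n) :
    √(Θ * α) / L * ((2 - √2) * √n) ≤ ∑ k ∈ Icc ((n + 1) / 2) n, comirrorStep Θ α (E k) k := by
  have hL : 0 < L := (norm_pos_iff.2 (hE 1 le_rfl)).trans_le (hEL 1 le_rfl)
  calc √(Θ * α) / L * ((2 - √2) * √n)
      ≤ √(Θ * α) / L * ∑ k ∈ Icc ((n + 1) / 2) n, 1 / √(k : ℝ) := by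
        gcongr; exact sum_Icc_half_one_div_sqrt_ge hn
    _ = ∑ k ∈ Icc ((n + 1) / 2) n, √(Θ * α) / L * (1 / √(k : ℝ)) := mul_sum _ _ _
    _ ≤ _ := sum_le_sum fun k hk => by
        have hk : 1 ≤ k := by have := (mem_Icc.1 hk).1; omega
        exact div_mul_one_div_sqrt_le_comirrorStep (hE k hk) (hEL k hk) hk

end Comirror

section ComirrorConvergence

variable {m : ℕ} {ω : EuclideanSpace ℝ (Fin m) → ℝ} {X : Set (EuclideanSpace ℝ (Fin m))}
  {Θ α : ℝ} {x E : ℕ → EuclideanSpace ℝ (Fin m)} {u : EuclideanSpace ℝ (Fin m)}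

lemma sum_comirrorStep_mul_inner_sub_le (hα : 0 < α) (hΘ : 0 < Θ) (hX : Convex ℝ X)
    (hω : ∀ y ∈ X, DifferentiableAt ℝ ω y)
    (hstrong : ∀ y ∈ X, ∀ z ∈ X, α / 2 * ‖y - z‖ ^ 2 ≤ bregman ω y z)
    (hD : ∀ y ∈ X, ∀ z ∈ X, bregman ω y z ≤ Θ) (hu : u ∈ X)
    (hx : ∀ k, 1 ≤ k → x k ∈ X) (hE : ∀ k, 1 ≤ k → E k ≠ 0)
    (hmin : ∀ k, 1 ≤ k → IsMinOn
      (fun v => ⟪comirrorStep Θ α (E k) k • E k - ∇ ω (x k), v⟫ + ω v) X (x (k + 1)))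
    {n : ℕ} (hn : 4 ≤ n) :
    ∑ k ∈ Icc ((n + 1) / 2) n, comirrorStep Θ α (E k) k * ⟪E k, x k - u⟫ ≤
      Θ * (1 + log 2) := by
  have hΘα : 0 < Θ * α := mul_pos hΘ hα
  have hD₀ : bregman ω u (x ((n + 1) / 2)) ≤ Θ := hD _ hu _ (hx _ (by omega))
  have hD₁ : 0 ≤ bregman ω u (x (n + 1)) :=
    (by positivity : 0 ≤ α / 2 * ‖u - x (n + 1)‖ ^ 2).trans (hstrong _ hu _ (hx _ (by omega)))
  have hstep : ∀ k ∈ Icc ((n + 1) / 2) n,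
      ‖comirrorStep Θ α (E k) k • E k‖ ^ 2 / (2 * α) = Θ / 2 * (1 / k) := fun k hk => by
    have hk : 1 ≤ k := by have := (mem_Icc.1 hk).1; omega
    rw [norm_comirrorStep_smul hΘα (hE k hk) hk, div_pow, sq_sqrt hΘα.le,
      sq_sqrt (by positivity)]
    field_simp
  calc ∑ k ∈ Icc ((n + 1) / 2) n, comirrorStep Θ α (E k) k * ⟪E k, x k - u⟫
      = ∑ k ∈ Icc ((n + 1) / 2) n, ⟪comirrorStep Θ α (E k) k • E k, x k - u⟫ := by
        simp only [real_inner_smul_left]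
    _ ≤ ∑ k ∈ Icc ((n + 1) / 2) n, ‖comirrorStep Θ α (E k) k • E k‖ ^ 2 / (2 * α) +
          (bregman ω u (x ((n + 1) / 2)) - bregman ω u (x (n + 1))) :=
        sum_inner_sub_le_of_isMinOn hα hX hω hstrong hu (by omega)
          (fun k hk => hx k (by have := (mem_Icc.1 hk).1; omega))
          (fun k hk => hmin k (by have := (mem_Icc.1 hk).1; omega))
    _ = Θ / 2 * ∑ k ∈ Icc ((n + 1) / 2) n, 1 / (k : ℝ) +
          (bregman ω u (x ((n + 1) / 2)) - bregman ω u (x (n + 1))) := by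
        rw [sum_congr rfl hstep, mul_sum]
    _ ≤ Θ / 2 * (2 * log 2) + (Θ - 0) := by
        gcongr
        exact sum_Icc_half_one_div_le hn
    _ = Θ * (1 + log 2) := by ring

lemma exists_inner_sub_le_of_comirror (hα : 0 < α) (hΘ : 0 < Θ) (hX : Convex ℝ X)
    (hω : ∀ y ∈ X, DifferentiableAt ℝ ω y)
    (hstrong : ∀ y ∈ X, ∀ z ∈ X, α / 2 * ‖y - z‖ ^ 2 ≤ bregman ω y z)
    (hD : ∀ y ∈ X, ∀ z ∈ X, bregman ω y z ≤ Θ) (hu : u ∈ X)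
    (hx : ∀ k, 1 ≤ k → x k ∈ X) (hE : ∀ k, 1 ≤ k → E k ≠ 0)
    {L : ℝ} (hEL : ∀ k, 1 ≤ k → ‖E k‖ ≤ L)
    (hmin : ∀ k, 1 ≤ k → IsMinOn
      (fun v => ⟪comirrorStep Θ α (E k) k • E k - ∇ ω (x k), v⟫ + ω v) X (x (k + 1)))
    {n : ℕ} (hn : 4 ≤ n) :
    ∃ k ∈ Icc ((n + 1) / 2) n,
      ⟪E k, x k - u⟫ ≤ √(Θ / α) * L * (1 + log 2) / (2 - √2) / √n := by
  have hL : 0 < L := (norm_pos_iff.2 (hE 1 le_rfl)).trans_le (hEL 1 le_rfl)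
  have hsqrt2 := sqrt_two_lt_three_halves
  have hn' : (0 : ℝ) < n := by positivity
  have hsqrt : √(Θ / α) * √(Θ * α) = Θ := by
    rw [← sqrt_mul (div_pos hΘ hα).le, show Θ / α * (Θ * α) = Θ * Θ by field_simp,
      sqrt_mul_self hΘ.le]
  refine exists_le_of_sum_mul_le (nonempty_Icc.2 (by omega))
    (fun k hk => comirrorStep_pos (mul_pos hΘ hα) (hE k (by have := (mem_Icc.1 hk).1; omega))
      (by have := (mem_Icc.1 hk).1; omega))
    ((sum_comirrorStep_mul_inner_sub_le hα hΘ hX hω hstrong hD hu hx hE hmin hn).trans ?_)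
  calc Θ * (1 + log 2)
      = √(Θ / α) * L * (1 + log 2) / (2 - √2) / √n * (√(Θ * α) / L * ((2 - √2) * √n)) := by
        have : 2 - √2 ≠ 0 := by linarith
        conv_lhs => rw [← hsqrt]
        field_simp
    _ ≤ _ := by
        have : 0 < 2 - √2 := by linarith
        gcongr
        exact sum_comirrorStep_ge hE hEL (by omega)

end ComirrorConvergence

theorem dfo_comirror_convergence_general {m : ℕ}
    (O : Set (EuclideanSpace ℝ (Fin m)))
    (f g : EuclideanSpace ℝ (Fin m) → ℝ)
    (X : Set (EuclideanSpace ℝ (Fin m)))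
    (hXconv : Convex ℝ X) (hXO : X ⊆ O)
    (ε : ℝ)
    (xstar : EuclideanSpace ℝ (Fin m)) (hxstar : xstar ∈ X) (hgxstar : g xstar ≤ 0)
    (ω : EuclideanSpace ℝ (Fin m) → ℝ)
    (hωdiff : ∀ x ∈ O, DifferentiableAt ℝ ω x)
    (α : ℝ) (hα : 0 < α)
    (hstrong : ∀ x ∈ X, ∀ y ∈ X,
      ω x - ω y - ⟪gradient ω y, x - y⟫ ≥ α / 2 * ‖x - y‖ ^ 2)
    (Θ : ℝ) (hΘpos : 0 < Θ) (hΘ : ∀ u ∈ X, ∀ v ∈ X, bregman ω u v ≤ Θ)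
    (Ω : ℝ) (hΩ0 : 0 ≤ Ω) (hΩ : ∀ x ∈ X, ∀ y ∈ X, ‖x - y‖ ≤ Ω)
    (κ₁ κ₂ : ℝ) (hκ₂ : 0 < κ₂)
    (x : ℕ → EuclideanSpace ℝ (Fin m)) (hx : ∀ k, 1 ≤ k → x k ∈ X)
    (E : ℕ → EuclideanSpace ℝ (Fin m)) (hE : ∀ k, 1 ≤ k → E k ≠ 0)
    (e : ℕ → EuclideanSpace ℝ (Fin m))
    (Δ : ℕ → ℝ)
    (hΔ : ∀ k, 1 ≤ k → 0 < Δ k ∧ Δ k ≤ 1 / Real.sqrt ((k : ℝ) + 1))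
    (hsub : ∀ k, 1 ≤ k →
      (g (x k) ≤ ε → e k ∈ subdiff O f (x k)) ∧
      (¬g (x k) ≤ ε → e k ∈ subdiff O g (x k)))
    (hebd : ∀ k, 1 ≤ k → ‖e k‖ ≤ κ₁)
    (herr : ∀ k, 1 ≤ k → ‖e k - E k‖ ≤ κ₂ * Δ k)
    (hmin : ∀ k, 1 ≤ k → ∀ u ∈ X,
      ⟪(Real.sqrt (Θ * α) / (‖E k‖ * Real.sqrt (k : ℝ))) • E k - gradient ω (x k),
          x (k + 1)⟫ + ω (x (k + 1)) ≤
        ⟪(Real.sqrt (Θ * α) / (‖E k‖ * Real.sqrt (k : ℝ))) • E k - gradient ω (x k),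
          u⟫ + ω u) :
    ∀ n : ℕ, 4 ≤ n →
      (∃ k, 1 ≤ k ∧ k ≤ n ∧ g (x k) ≤ ε ∧
          f (x k) - f xstar ≤
            (2 * Real.sqrt (Θ / α) * max κ₁ κ₂ * (1 + Real.log 2) / (2 - Real.sqrt 2) +
                Real.sqrt 2 * κ₂ * Ω) / Real.sqrt (n : ℝ)) ∨
        ε ≤ (2 * Real.sqrt (Θ / α) * max κ₁ κ₂ * (1 + Real.log 2) / (2 - Real.sqrt 2) +
                Real.sqrt 2 * κ₂ * Ω) / Real.sqrt (n : ℝ) := by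
  intro n hn
  have hEL : ∀ k, 1 ≤ k → ‖E k‖ ≤ 2 * max κ₁ κ₂ := fun k hk => by
    have hΔ1 : Δ k ≤ 1 := (hΔ k hk).2.trans (by
      rw [div_le_one (sqrt_pos.2 (by positivity))]; exact one_le_sqrt.2 (by simp))
    calc ‖E k‖ ≤ ‖e k‖ + ‖e k - E k‖ := norm_le_norm_add_norm_sub _ _
      _ ≤ κ₁ + κ₂ * 1 := add_le_add (hebd k hk) ((herr k hk).trans (by gcongr))
      _ ≤ 2 * max κ₁ κ₂ := by linarith [le_max_left κ₁ κ₂, le_max_right κ₁ κ₂]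
  obtain ⟨k, hk, hEk⟩ := exists_inner_sub_le_of_comirror hα hΘpos hXconv
    (fun y hy => hωdiff y (hXO hy)) hstrong hΘ hxstar hx hE hEL
    (fun k hk => isMinOn_iff.2 (hmin k hk)) hn
  obtain ⟨hk₀, hkn⟩ := mem_Icc.1 hk
  have hk1 : 1 ≤ k := by omega
  have hΔk : Δ k ≤ √2 / √n := (hΔ k hk1).2.trans
    (one_div_sqrt_le_sqrt_two_div_sqrt (by positivity) (by norm_cast; omega))
  have he : ⟪e k, x k - xstar⟫ ≤
      (2 * √(Θ / α) * max κ₁ κ₂ * (1 + log 2) / (2 - √2) + √2 * κ₂ * Ω) / √n := by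
    refine (inner_le_add_mul_of_norm_sub_le hEk (herr k hk1) (hΩ _ (hx k hk1) _ hxstar)
      ((norm_nonneg _).trans (herr k hk1))).trans ?_
    calc _ ≤ √(Θ / α) * (2 * max κ₁ κ₂) * (1 + log 2) / (2 - √2) / √n +
          κ₂ * (√2 / √n) * Ω := by gcongr
      _ = _ := by ring
  by_cases hgk : g (x k) ≤ ε
  · exact Or.inl ⟨k, hk1, hkn, hgk,
      (sub_le_inner_of_mem_subdiff ((hsub k hk1).1 hgk) (hXO hxstar)).trans he⟩
  · have hsg := sub_le_inner_of_mem_subdiff ((hsub k hk1).2 hgk) (hXO hxstar)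
    exact Or.inr (by linarith [not_le.1 hgk])

theorem dfo_comirror_convergence {m : ℕ} (hm : 1 ≤ m)
    (O : Set (EuclideanSpace ℝ (Fin m))) (hOne : O.Nonempty) (hOopen : IsOpen O)
    (hOconv : Convex ℝ O)
    (f g : EuclideanSpace ℝ (Fin m) → ℝ)
    (hf : ConvexOn ℝ O f) (hg : ConvexOn ℝ O g)
    (X : Set (EuclideanSpace ℝ (Fin m))) (hXne : X.Nonempty) (hXcpt : IsCompact X)
    (hXconv : Convex ℝ X) (hXO : X ⊆ O)
    (hXtwo : ∃ a ∈ X, ∃ b ∈ X, a ≠ b)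
    (ε : ℝ) (hε : 0 < ε)
    (xstar : EuclideanSpace ℝ (Fin m)) (hxstar : xstar ∈ X) (hgxstar : g xstar ≤ 0)
    (hopt : ∀ x ∈ X, g x ≤ 0 → f xstar ≤ f x)
    (ω : EuclideanSpace ℝ (Fin m) → ℝ) (hωconv : ConvexOn ℝ O ω)
    (hωdiff : ∀ x ∈ O, DifferentiableAt ℝ ω x)
    (α : ℝ) (hα : 0 < α)
    (hstrong : ∀ x ∈ X, ∀ y ∈ X,
      ω x - ω y - ⟪gradient ω y, x - y⟫ ≥ α / 2 * ‖x - y‖ ^ 2)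
    (Θ : ℝ) (hΘpos : 0 < Θ) (hΘ : ∀ u ∈ X, ∀ v ∈ X, bregman ω u v ≤ Θ)
    (Ω : ℝ) (hΩ0 : 0 ≤ Ω) (hΩ : ∀ x ∈ X, ∀ y ∈ X, ‖x - y‖ ≤ Ω)
    (κ₁ κ₂ : ℝ) (hκ₁ : 0 < κ₁) (hκ₂ : 0 < κ₂)
    (x : ℕ → EuclideanSpace ℝ (Fin m)) (hx : ∀ k, 1 ≤ k → x k ∈ X)
    (E : ℕ → EuclideanSpace ℝ (Fin m)) (hE : ∀ k, 1 ≤ k → E k ≠ 0)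
    (e : ℕ → EuclideanSpace ℝ (Fin m))
    (Δ : ℕ → ℝ)
    (hΔ : ∀ k, 1 ≤ k → 0 < Δ k ∧ Δ k ≤ 1 / Real.sqrt ((k : ℝ) + 1))
    (hsub : ∀ k, 1 ≤ k →
      (g (x k) ≤ ε → e k ∈ subdiff O f (x k)) ∧
      (¬g (x k) ≤ ε → e k ∈ subdiff O g (x k)))
    (hebd : ∀ k, 1 ≤ k → ‖e k‖ ≤ κ₁)
    (herr : ∀ k, 1 ≤ k → ‖e k - E k‖ ≤ κ₂ * Δ k)
    (hmin : ∀ k, 1 ≤ k → ∀ u ∈ X,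
      ⟪(Real.sqrt (Θ * α) / (‖E k‖ * Real.sqrt (k : ℝ))) • E k - gradient ω (x k),
          x (k + 1)⟫ + ω (x (k + 1)) ≤
        ⟪(Real.sqrt (Θ * α) / (‖E k‖ * Real.sqrt (k : ℝ))) • E k - gradient ω (x k),
          u⟫ + ω u) :
    ∀ n : ℕ, 4 ≤ n →
      (∃ k, 1 ≤ k ∧ k ≤ n ∧ g (x k) ≤ ε ∧
          f (x k) - f xstar ≤
            (2 * Real.sqrt (Θ / α) * max κ₁ κ₂ * (1 + Real.log 2) / (2 - Real.sqrt 2) +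
                Real.sqrt 2 * κ₂ * Ω) / Real.sqrt (n : ℝ)) ∨
        ε ≤ (2 * Real.sqrt (Θ / α) * max κ₁ κ₂ * (1 + Real.log 2) / (2 - Real.sqrt 2) +
                Real.sqrt 2 * κ₂ * Ω) / Real.sqrt (n : ℝ) :=
  dfo_comirror_convergence_general O f g X hXconv hXO ε xstar hxstar hgxstar ω hωdiff α hα hstrong Θ
    hΘpos hΘ Ω hΩ0 hΩ κ₁ κ₂ hκ₂ x hx E hE e Δ hΔ hsub hebd herr hmin
end

section
/- Let m ≥ 1, let O ⊆ ℝ^m be an open set, and let f : O → ℝ be of class C². Let Y = (y₀, y₁, ..., y_m) be a poised tuple of points centred at y₀ ∈ O, set Δ = max_{1≤i≤m} ‖y_i − y₀‖, and suppose the closed ball B(y₀; Δ) is contained in O and that ∇f is K_f-Lipschitz on B(y₀; Δ). Let F be the linear interpolation model of f over Y. Then for every y ∈ B(y₀; Δ): ‖∇f(y) − ∇F(y)‖ ≤ K_f·(1 + √m·‖L̂⁻¹‖/2)·Δ. -/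
/-!
Expand the interpolation conditions around `y₀`: since `F(yᵢ) - F(y₀) = ⟪∇F, yᵢ - y₀⟫`, the
first-order Taylor remainder of `f` at `y₀` (at most `K_f Δ² / 2` for a `K_f`-Lipschitz gradient)
bounds every component of `L (∇F - ∇f(y₀))`. Inverting `L` costs `‖L⁻¹‖`, passing from the
componentwise bound to the Euclidean norm costs `√m`, and `‖L⁻¹‖ = ‖L̂⁻¹‖ / Δ`; this gives
`‖∇F - ∇f(y₀)‖ ≤ K_f √m ‖L̂⁻¹‖ Δ / 2`. Moving from `y₀` to `y` adds `K_f Δ` by the Lipschitz bound.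
-/

open scoped RealInnerProductSpace

/-- A tuple `Y = (y₀, …, y_m)` of points of `ℝ^m` is poised if the `(m+1)×(m+1)` matrix
whose `i`-th row is `(1, yᵢ)` is invertible. -/
def Poised {m : ℕ} (Y : Fin (m + 1) → EuclideanSpace ℝ (Fin m)) : Prop :=
  (Matrix.of fun i : Fin (m + 1) => Fin.cons (1 : ℝ) (fun j : Fin m => Y i j)).det ≠ 0

/-- The spectral norm of a square real matrix, i.e. the operator norm of the induced
map on Euclidean space. -/
noncomputable def specNorm {n : ℕ} (M : Matrix (Fin n) (Fin n) ℝ) : ℝ :=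
  ‖(Matrix.toEuclideanCLM (𝕜 := ℝ) M :
      EuclideanSpace ℝ (Fin n) →L[ℝ] EuclideanSpace ℝ (Fin n))‖

/-- The matrix `L(Y)` whose `i`-th row is `yᵢ - y₀`, for `i = 1, …, m`. -/
noncomputable def Lmat {m : ℕ} (Y : Fin (m + 1) → EuclideanSpace ℝ (Fin m)) :
    Matrix (Fin m) (Fin m) ℝ :=
  Matrix.of fun i j : Fin m => (Y i.succ - Y 0) j

open scoped Matrix

theorem abs_sub_sub_inner_gradient_le {E : Type*} [NormedAddCommGroup E] [InnerProductSpace ℝ E]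
    [CompleteSpace E] {f : E → ℝ} {s : Set E} (hs : Convex ℝ s)
    (hf : ∀ x ∈ s, DifferentiableAt ℝ f x) {K : ℝ}
    (hLip : ∀ x ∈ s, ∀ y ∈ s, ‖gradient f x - gradient f y‖ ≤ K * ‖x - y‖)
    {c z : E} (hc : c ∈ s) (hz : z ∈ s) :
    |f z - f c - ⟪gradient f c, z - c⟫| ≤ K / 2 * ‖z - c‖ ^ 2 := by
  set v := z - c
  have hseg : ∀ t ∈ Set.Icc (0 : ℝ) 1, c + t • v ∈ s := fun t ht => hs.add_smul_sub_mem hc hz ht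
  have hderiv : ∀ t ∈ Set.Icc (0 : ℝ) 1,
      HasDerivAt (fun t : ℝ => f (c + t • v) - f c - t * ⟪gradient f c, v⟫)
        ⟪gradient f (c + t • v) - gradient f c, v⟫ t := by
    intro t ht
    have hγ : HasDerivAt (fun t : ℝ => c + t • v) v t := by
      simpa using ((hasDerivAt_id t).smul_const v).const_add c
    have hfγ := (hf _ (hseg t ht)).hasGradientAt.hasFDerivAt.comp_hasDerivAt t hγ
    rw [InnerProductSpace.toDual_apply_apply] at hfγ
    exact ((hfγ.sub_const (f c)).sub ((hasDerivAt_id t).mul_const _)).congr_deriv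
      (by rw [inner_sub_left, one_mul])
  have hderiv_le : ∀ t ∈ Set.Ico (0 : ℝ) 1,
      ‖⟪gradient f (c + t • v) - gradient f c, v⟫‖ ≤ K * ‖v‖ ^ 2 * t := fun t ht =>
    calc ‖⟪gradient f (c + t • v) - gradient f c, v⟫‖
        ≤ ‖gradient f (c + t • v) - gradient f c‖ * ‖v‖ := norm_inner_le_norm _ _
      _ ≤ K * ‖t • v‖ * ‖v‖ := by
        gcongr
        simpa using hLip _ (hseg t (Set.Ico_subset_Icc_self ht)) _ hc
      _ = K * ‖v‖ ^ 2 * t := by rw [norm_smul, Real.norm_of_nonneg ht.1]; ring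
  -- The remainder vanishes at `t = 0` and grows no faster than `K ‖v‖² t² / 2`.
  have hremainder := image_norm_le_of_norm_deriv_right_le_deriv_boundary
    (B := fun t => K / 2 * ‖v‖ ^ 2 * t ^ 2) (a := 0) (b := 1)
    (fun t ht => (hderiv t ht).continuousAt.continuousWithinAt)
    (fun t ht => (hderiv t (Set.Ico_subset_Icc_self ht)).hasDerivWithinAt) (by simp)
    (fun t => ((hasDerivAt_pow 2 t).const_mul _).congr_deriv (by norm_num; ring)) hderiv_le
    (Set.right_mem_Icc.2 zero_le_one)
  simpa [v] using hremainder

theorem gradient_const_add_inner {E : Type*} [NormedAddCommGroup E] [InnerProductSpace ℝ E]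
    [CompleteSpace E] (a₀ : ℝ) (a x : E) : gradient (fun x => a₀ + ⟪a, x⟫) x = a := by
  refine HasGradientAt.gradient ?_
  rw [hasGradientAt_iff_hasFDerivAt]
  exact ((innerSL ℝ a).hasFDerivAt.const_add a₀)

theorem EuclideanSpace.norm_le_sqrt_card_mul_of_abs_le {ι : Type*} [Fintype ι]
    {x : EuclideanSpace ℝ ι} {ε : ℝ} (h : ∀ i, |x i| ≤ ε) : ‖x‖ ≤ √(Fintype.card ι) * ε := by
  rcases isEmpty_or_nonempty ι with hι | ⟨⟨i⟩⟩
  · simp [EuclideanSpace.norm_eq]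
  have hε : 0 ≤ ε := (abs_nonneg _).trans (h i)
  calc ‖x‖ = √(∑ j, ‖x j‖ ^ 2) := EuclideanSpace.norm_eq x
    _ ≤ √(∑ _j : ι, ε ^ 2) := by
      gcongr with j
      exact h j
    _ = √(Fintype.card ι) * ε := by
      rw [Finset.sum_const, Finset.card_univ, nsmul_eq_mul, Real.sqrt_mul (Nat.cast_nonneg _),
        Real.sqrt_sq hε]

theorem specNorm_smul {n : ℕ} (c : ℝ) (A : Matrix (Fin n) (Fin n) ℝ) :
    specNorm (c • A) = |c| * specNorm A := by
  simp [specNorm, norm_smul]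

theorem specNorm_inv_smul {n : ℕ} {A : Matrix (Fin n) (Fin n) ℝ} (hA : IsUnit A.det) {c : ℝ}
    (hc : c ≠ 0) : specNorm (c • A)⁻¹ = |c|⁻¹ * specNorm A⁻¹ := by
  have hinv : (c • A)⁻¹ = c⁻¹ • A⁻¹ := Matrix.inv_eq_right_inv <| by
    rw [Matrix.smul_mul, Matrix.mul_smul, smul_smul, Matrix.mul_nonsing_inv _ hA,
      mul_inv_cancel₀ hc, one_smul]
  rw [hinv, specNorm_smul, abs_inv]

theorem norm_le_specNorm_inv_mul {n : ℕ} {A : Matrix (Fin n) (Fin n) ℝ} (hA : IsUnit A.det)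
    (x : EuclideanSpace ℝ (Fin n)) : ‖x‖ ≤ specNorm A⁻¹ * ‖WithLp.toLp 2 (A *ᵥ x.ofLp)‖ := by
  have h := (Matrix.toEuclideanCLM (𝕜 := ℝ) A⁻¹).le_opNorm (WithLp.toLp 2 (A *ᵥ x.ofLp))
  rwa [Matrix.toEuclideanCLM_toLp, Matrix.mulVec_mulVec, Matrix.nonsing_inv_mul _ hA,
    Matrix.one_mulVec] at h

theorem poised_iff_det_Lmat_ne_zero {m : ℕ} (Y : Fin (m + 1) → EuclideanSpace ℝ (Fin m)) :
    Poised Y ↔ (Lmat Y).det ≠ 0 := by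
  -- Subtracting row `0` from the others leaves `(1, y₀)` above the rows `(0, yᵢ - y₀)`.
  set M := Matrix.of fun i : Fin (m + 1) => Fin.cons (1 : ℝ) (fun j : Fin m => Y i j)
  have hrow : M.det = (Matrix.of fun i j => M i j - if i = 0 then 0 else M 0 j).det :=
    (Matrix.det_eq_of_forall_row_eq_smul_add_const (fun i => if i = 0 then 0 else -1) 0
      (if_pos rfl) fun i j => by simp only [Matrix.of_apply]; split_ifs <;> ring).symm
  rw [Poised, hrow, Matrix.det_succ_column_zero, Fin.sum_univ_succ]
  simp [M, Lmat, Matrix.submatrix]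

theorem succ_ne_of_det_Lmat_ne_zero {m : ℕ} {Y : Fin (m + 1) → EuclideanSpace ℝ (Fin m)}
    (hY : (Lmat Y).det ≠ 0) (i : Fin m) : Y i.succ ≠ Y 0 := fun h =>
  hY <| Matrix.det_eq_zero_of_row_eq_zero i fun j => by simp [Lmat, h]

theorem Lmat_mulVec {m : ℕ} (Y : Fin (m + 1) → EuclideanSpace ℝ (Fin m))
    (w : EuclideanSpace ℝ (Fin m)) : Lmat Y *ᵥ w.ofLp = fun i => ⟪Y i.succ - Y 0, w⟫ := by
  ext i
  simp [Lmat, Matrix.mulVec, dotProduct, PiLp.inner_apply, mul_comm]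

theorem norm_le_of_forall_abs_inner_sub_le {m : ℕ} {Y : Fin (m + 1) → EuclideanSpace ℝ (Fin m)}
    (hY : (Lmat Y).det ≠ 0) {w : EuclideanSpace ℝ (Fin m)} {ε : ℝ}
    (hw : ∀ i : Fin m, |⟪Y i.succ - Y 0, w⟫| ≤ ε) : ‖w‖ ≤ √m * specNorm (Lmat Y)⁻¹ * ε := by
  have hLw : ‖WithLp.toLp 2 (Lmat Y *ᵥ w.ofLp)‖ ≤ √m * ε := by
    simpa using EuclideanSpace.norm_le_sqrt_card_mul_of_abs_le
      (x := WithLp.toLp 2 (Lmat Y *ᵥ w.ofLp)) fun i => by simpa [Lmat_mulVec] using hw i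
  calc ‖w‖ ≤ specNorm (Lmat Y)⁻¹ * ‖WithLp.toLp 2 (Lmat Y *ᵥ w.ofLp)‖ :=
        norm_le_specNorm_inv_mul hY.isUnit w
    _ ≤ specNorm (Lmat Y)⁻¹ * (√m * ε) := by gcongr; exact norm_nonneg _
    _ = √m * specNorm (Lmat Y)⁻¹ * ε := by ring

theorem linear_interpolation_gradient_error_bound_general {m : ℕ}
    (O : Set (EuclideanSpace ℝ (Fin m))) (hOopen : IsOpen O)
    (f : EuclideanSpace ℝ (Fin m) → ℝ) (hf : ContDiffOn ℝ 2 f O)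
    (Y : Fin (m + 1) → EuclideanSpace ℝ (Fin m)) (hpoised : Poised Y)
    (Δ : ℝ) (hΔ : IsGreatest (Set.range fun i : Fin m => ‖Y i.succ - Y 0‖) Δ)
    (hball : Metric.closedBall (Y 0) Δ ⊆ O)
    (Kf : ℝ) (hKf0 : 0 ≤ Kf)
    (hLip : ∀ x ∈ Metric.closedBall (Y 0) Δ, ∀ y ∈ Metric.closedBall (Y 0) Δ,
      ‖gradient f x - gradient f y‖ ≤ Kf * ‖x - y‖)
    (F : EuclideanSpace ℝ (Fin m) → ℝ)
    (hFaff : ∃ (a₀ : ℝ) (a : EuclideanSpace ℝ (Fin m)), F = fun x => a₀ + ⟪a, x⟫)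
    (hFinterp : ∀ i, F (Y i) = f (Y i)) :
    ∀ y ∈ Metric.closedBall (Y 0) Δ,
      ‖gradient f y - gradient F y‖ ≤
        Kf * (1 + Real.sqrt (m : ℝ) * specNorm (Δ⁻¹ • Lmat Y)⁻¹ / 2) * Δ := by
  intro y hy
  obtain ⟨a₀, a, rfl⟩ := hFaff
  have hL := (poised_iff_det_Lmat_ne_zero Y).1 hpoised
  obtain ⟨i₀, hi₀⟩ := hΔ.1
  have hΔpos : 0 < Δ := hi₀ ▸ norm_pos_iff.2 (sub_ne_zero.2 (succ_ne_of_det_Lmat_ne_zero hL i₀))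
  have hY : ∀ i : Fin m, Y i.succ ∈ Metric.closedBall (Y 0) Δ := fun i =>
    mem_closedBall_iff_norm.2 (hΔ.2 ⟨i, rfl⟩)
  have hY0 : Y 0 ∈ Metric.closedBall (Y 0) Δ := Metric.mem_closedBall_self hΔpos.le
  have hdiff : ∀ x ∈ Metric.closedBall (Y 0) Δ, DifferentiableAt ℝ f x := fun x hx =>
    (hf.differentiableOn two_ne_zero x (hball hx)).differentiableAt (hOopen.mem_nhds (hball hx))
  have hcenter : ‖a - gradient f (Y 0)‖ ≤ √m * specNorm (Lmat Y)⁻¹ * (Kf / 2 * Δ ^ 2) := by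
    refine norm_le_of_forall_abs_inner_sub_le hL fun i => ?_
    have htaylor := abs_sub_sub_inner_gradient_le (convex_closedBall _ _) hdiff hLip hY0 (hY i)
    rw [← hFinterp, ← hFinterp, add_sub_add_left_eq_sub, ← inner_sub_right, ← inner_sub_left,
      real_inner_comm] at htaylor
    refine htaylor.trans (by gcongr; exact mem_closedBall_iff_norm.1 (hY i))
  have hfar : ‖gradient f y - gradient f (Y 0)‖ ≤ Kf * Δ :=
    (hLip y hy _ hY0).trans (by gcongr; exact mem_closedBall_iff_norm.1 hy)
  calc ‖gradient f y - gradient (fun x => a₀ + ⟪a, x⟫) y‖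
      = ‖(gradient f y - gradient f (Y 0)) - (a - gradient f (Y 0))‖ := by
        rw [gradient_const_add_inner, sub_sub_sub_cancel_right]
    _ ≤ Kf * Δ + √m * specNorm (Lmat Y)⁻¹ * (Kf / 2 * Δ ^ 2) := norm_sub_le_of_le hfar hcenter
    _ = Kf * (1 + √m * specNorm (Δ⁻¹ • Lmat Y)⁻¹ / 2) * Δ := by
        rw [specNorm_inv_smul hL.isUnit (inv_ne_zero hΔpos.ne'), abs_inv, inv_inv,
          abs_of_pos hΔpos]
        ring

theorem linear_interpolation_gradient_error_bound {m : ℕ} (hm : 1 ≤ m)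
    (O : Set (EuclideanSpace ℝ (Fin m))) (hOopen : IsOpen O)
    (f : EuclideanSpace ℝ (Fin m) → ℝ) (hf : ContDiffOn ℝ 2 f O)
    (Y : Fin (m + 1) → EuclideanSpace ℝ (Fin m)) (hY0 : Y 0 ∈ O) (hpoised : Poised Y)
    (Δ : ℝ) (hΔ : IsGreatest (Set.range fun i : Fin m => ‖Y i.succ - Y 0‖) Δ)
    (hball : Metric.closedBall (Y 0) Δ ⊆ O)
    (Kf : ℝ) (hKf0 : 0 ≤ Kf)
    (hLip : ∀ x ∈ Metric.closedBall (Y 0) Δ, ∀ y ∈ Metric.closedBall (Y 0) Δ,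
      ‖gradient f x - gradient f y‖ ≤ Kf * ‖x - y‖)
    (F : EuclideanSpace ℝ (Fin m) → ℝ)
    (hFaff : ∃ (a₀ : ℝ) (a : EuclideanSpace ℝ (Fin m)), F = fun x => a₀ + ⟪a, x⟫)
    (hFinterp : ∀ i, F (Y i) = f (Y i)) :
    ∀ y ∈ Metric.closedBall (Y 0) Δ,
      ‖gradient f y - gradient F y‖ ≤
        Kf * (1 + Real.sqrt (m : ℝ) * specNorm (Δ⁻¹ • Lmat Y)⁻¹ / 2) * Δ :=
  linear_interpolation_gradient_error_bound_general O hOopen f hf Y hpoised Δ hΔ hball Kf hKf0 hLip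
    F hFaff hFinterp
end
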